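/- Let μ be an ergodic f-invariant Borel probability measure on a compact metric space, A a Borel set with μ(A) > 0, and ρ > 0. For x ∈ A and n ∈ ℕ let A_{ρ,n} := {x ∈ A : f^m(x) ∈ A for some integer m with n ≤ m ≤ (1+ρ)n}. Then for every 0 < ε < 1 there exists N such that μ(A_{ρ,n}) ≥ (1−ε)μ(A) for every n ≥ N. -/

import Mathlib

/-!
By von Neumann's mean ergodic theorem applied to the Koopman operator on `L²(μ)`, the Birkhoff
averages `φ_k` of `1_A` converge in `L²`, hence in measure, to the constant `μ A`. If `x ∈ A` has
no return time in `[n, (1 + ρ) n]`, then the visit counts up to `n` and up to `M = ⌈(1 + ρ) n⌉`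
agree, i.e. `n φ_n(x) = M φ_M(x)`, so `φ_n(x)` and `φ_M(x)` cannot both be close to `μ A`.
For large `n` the set of such points therefore has measure at most `ε μ(A)`.
-/

open MeasureTheory Filter Topology Function

section MeanErgodic

theorem ContinuousLinearMap.exists_fixed_tendsto_birkhoffAverage {𝕜 E : Type*} [RCLike 𝕜]
    [NormedAddCommGroup E] [InnerProductSpace 𝕜 E] [CompleteSpace E]
    (T : E →L[𝕜] E) (hT : ‖T‖ ≤ 1) (x : E) :
    ∃ y, T y = y ∧ (∀ z, T z = z → inner 𝕜 z y = inner 𝕜 z x) ∧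
      Tendsto (birkhoffAverage 𝕜 T id · x) atTop (𝓝 y) := by
  refine ⟨_, ?_, fun z hz => ?_, T.tendsto_birkhoffAverage_orthogonalProjection hT x⟩
  · exact LinearMap.mem_eqLocus.mp (Subtype.property _)
  · exact Submodule.inner_orthogonalProjectionOnto_eq_of_mem_left ⟨z, hz⟩ x

variable {X : Type*} [MeasurableSpace X] {f : X → X} {μ : Measure X}

namespace MeasureTheory.Lp

variable {E : Type*} [NormedAddCommGroup E] {p : ENNReal}

theorem coeFn_birkhoffSum_compMeasurePreserving (hf : MeasurePreserving f μ μ)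
    (G : Lp E p μ) (N : ℕ) :
    ⇑(birkhoffSum (compMeasurePreserving f hf) id N G) =ᵐ[μ] birkhoffSum f G N := by
  induction N with
  | zero => simpa using coeFn_zero E p μ
  | succ N ih =>
    rw [birkhoffSum_succ, id_eq, compMeasurePreserving_iterate]
    filter_upwards [coeFn_add (birkhoffSum (compMeasurePreserving f hf) id N G)
      (compMeasurePreserving f^[N] (hf.iterate N) G), ih,
      coeFn_compMeasurePreserving G (hf.iterate N)] with x hadd hsum hN
    rw [hadd, Pi.add_apply, hsum, hN, birkhoffSum_succ, comp_apply]

theorem coeFn_birkhoffAverage_compMeasurePreserving {𝕜 : Type*} [NormedField 𝕜]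
    [NormedSpace 𝕜 E] (hf : MeasurePreserving f μ μ) (G : Lp E p μ) (N : ℕ) :
    ⇑(birkhoffAverage 𝕜 (compMeasurePreserving f hf) id N G) =ᵐ[μ] birkhoffAverage 𝕜 f G N :=
  (coeFn_smul _ _).trans ((coeFn_birkhoffSum_compMeasurePreserving hf G N).const_smul _)

theorem compMeasurePreserving_indicatorConstLp_univ [IsFiniteMeasure μ]
    (hf : MeasurePreserving f μ μ) (c : E) :
    compMeasurePreserving f hf (indicatorConstLp p MeasurableSet.univ (measure_ne_top μ _) c) =
      indicatorConstLp p MeasurableSet.univ (measure_ne_top μ _) c := by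
  have h := indicatorConstLp_coeFn (p := p) (hs := MeasurableSet.univ)
    (hμs := measure_ne_top μ Set.univ) (c := c)
  ext1
  filter_upwards [coeFn_compMeasurePreserving
      (indicatorConstLp p MeasurableSet.univ (measure_ne_top μ _) c) hf,
    hf.quasiMeasurePreserving.ae h, h] with x hcomp hfx hx
  rw [hcomp, comp_apply, hfx, hx, Set.indicator_univ]

end MeasureTheory.Lp

theorem Ergodic.exists_ae_eq_const_of_compMeasurePreserving_eq {E : Type*}
    [NormedAddCommGroup E] {p : ENNReal} (hf : Ergodic f μ) {P : Lp E p μ}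
    (hP : Lp.compMeasurePreserving f hf.toMeasurePreserving P = P) :
    ∃ c, P =ᵐ[μ] fun _ => c := by
  obtain ⟨c, hc⟩ := hf.eq_const_of_compMeasurePreserving_eq (congrArg Subtype.val hP)
  refine ⟨c, ?_⟩
  change ⇑(P : X →ₘ[μ] E) =ᵐ[μ] _
  exact hc ▸ AEEqFun.coeFn_const X c

theorem Ergodic.tendstoInMeasure_birkhoffAverage {𝕜 : Type*} [RCLike 𝕜] [IsProbabilityMeasure μ]
    (hf : Ergodic f μ) {g : X → 𝕜} (hg : MemLp g 2 μ) :
    TendstoInMeasure μ (birkhoffAverage 𝕜 f g) atTop (fun _ => ∫ x, g x ∂μ) := by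
  obtain ⟨P, hPfix, hPinner, hlim⟩ :=
    (Lp.compMeasurePreservingₗᵢ 𝕜 f hf.toMeasurePreserving (E := 𝕜) (p := 2))
      |>.toContinuousLinearMap.exists_fixed_tendsto_birkhoffAverage
        (LinearIsometry.norm_toContinuousLinearMap_le _) (hg.toLp g)
  obtain ⟨c, hc⟩ := hf.exists_ae_eq_const_of_compMeasurePreserving_eq hPfix
  -- pairing with the invariant vector `1` identifies the constant
  have hc_eq : c = ∫ x, g x ∂μ := by
    have := hPinner (indicatorConstLp 2 MeasurableSet.univ (measure_ne_top μ _) 1)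
      (Lp.compMeasurePreserving_indicatorConstLp_univ _ _)
    simp only [L2.inner_indicatorConstLp_one, setIntegral_univ] at this
    rwa [integral_congr_ae hc, integral_congr_ae hg.coeFn_toLp, integral_const, probReal_univ,
      one_smul] at this
  refine (tendstoInMeasure_of_tendsto_Lp hlim).congr (fun N => ?_) (hc_eq ▸ hc)
  exact (Lp.coeFn_birkhoffAverage_compMeasurePreserving hf.toMeasurePreserving _ N).trans
    (hf.quasiMeasurePreserving.birkhoffAverage_ae_eq_of_ae_eq 𝕜 hg.coeFn_toLp N)

theorem Ergodic.tendstoInMeasure_birkhoffAverage_indicator [IsProbabilityMeasure μ]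
    (hf : Ergodic f μ) {A : Set X} (hA : MeasurableSet A) :
    TendstoInMeasure μ (birkhoffAverage ℝ f (A.indicator 1)) atTop (fun _ => μ.real A) := by
  rw [← integral_indicator_one hA]
  exact hf.tendstoInMeasure_birkhoffAverage ((memLp_const 1).indicator hA)

end MeanErgodic

theorem birkhoffSum_eq_of_forall_mem_Ico {α M : Type*} [AddCommMonoid M] {f : α → α}
    {g : α → M} {x : α} {n m : ℕ} (hnm : n ≤ m) (h : ∀ k ∈ Finset.Ico n m, g (f^[k] x) = 0) :
    birkhoffSum f g m x = birkhoffSum f g n x := by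
  rw [birkhoffSum, birkhoffSum, ← Finset.sum_range_add_sum_Ico _ hnm, Finset.sum_eq_zero h,
    add_zero]

theorem natCast_smul_birkhoffAverage {R α M : Type*} [DivisionSemiring R] [CharZero R]
    [AddCommMonoid M] [Module R M] (f : α → α) (g : α → M) {n : ℕ} (hn : n ≠ 0) (x : α) :
    (n : R) • birkhoffAverage R f g n x = birkhoffSum f g n x := by
  rw [birkhoffAverage, smul_inv_smul₀ (Nat.cast_ne_zero.mpr hn)]

theorem le_dist_or_le_dist_of_mul_eq_mul {ρ c n M u v : ℝ} (hρ : 0 ≤ ρ) (hc : 0 ≤ c)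
    (hn : 0 < n) (hM : (1 + ρ) * n ≤ M) (huv : n * u = M * v) :
    ρ * c / (2 + ρ) ≤ dist u c ∨ ρ * c / (2 + ρ) ≤ dist v c := by
  by_contra! h
  obtain ⟨hu, hv⟩ := h
  rw [Real.dist_eq, abs_lt] at hu hv
  set δ := ρ * c / (2 + ρ) with hδ
  have hδc : (2 + ρ) * δ = ρ * c := by rw [hδ]; field_simp
  have hv0 : 0 ≤ v := by nlinarith
  -- `n (c + δ) > n u = M v ≥ (1 + ρ) n v > (1 + ρ) n (c - δ)`
  have hchain : n * ((1 + ρ) * (c - δ)) < n * (c + δ) := by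
    nlinarith [mul_lt_mul_of_pos_left hu.2 hn, mul_le_mul_of_nonneg_right hM hv0,
      mul_lt_mul_of_pos_left (show c - δ < v by linarith) (by positivity : 0 < (1 + ρ) * n)]
  linarith [lt_of_mul_lt_mul_left hchain hn.le]

section WindowReturn

variable {X : Type*} {f : X → X} {A : Set X} {ρ : ℝ}

theorem le_natCeil_one_add_mul (hρ : 0 ≤ ρ) (n : ℕ) : n ≤ ⌈(1 + ρ) * n⌉₊ := by
  have : (n : ℝ) ≤ (1 + ρ) * n := le_mul_of_one_le_left n.cast_nonneg (by linarith)
  exact_mod_cast this.trans (Nat.le_ceil _)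

/-- The set `A_{ρ,n}`. -/
def windowReturnSet (f : X → X) (A : Set X) (ρ : ℝ) (n : ℕ) : Set X :=
  {x ∈ A | ∃ m : ℕ, n ≤ m ∧ (m : ℝ) ≤ (1 + ρ) * n ∧ f^[m] x ∈ A}

theorem subset_windowReturnSet_union (hρ : 0 ≤ ρ) {c : ℝ} (hc : 0 ≤ c) {n : ℕ} (hn : 0 < n) :
    A ⊆ windowReturnSet f A ρ n
      ∪ {x | ρ * c / (2 + ρ) ≤ dist (birkhoffAverage ℝ f (A.indicator (1 : X → ℝ)) n x) c}
      ∪ {x | ρ * c / (2 + ρ) ≤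
          dist (birkhoffAverage ℝ f (A.indicator (1 : X → ℝ)) ⌈(1 + ρ) * n⌉₊ x) c} := by
  intro x hxA
  by_cases hx : x ∈ windowReturnSet f A ρ n
  · exact Or.inl (Or.inl hx)
  set M := ⌈(1 + ρ) * n⌉₊
  have hnM : (1 + ρ) * n ≤ M := Nat.le_ceil _
  have hnM' : n ≤ M := le_natCeil_one_add_mul hρ n
  have hsum : birkhoffSum f (A.indicator (1 : X → ℝ)) M x
      = birkhoffSum f (A.indicator (1 : X → ℝ)) n x := by
    refine birkhoffSum_eq_of_forall_mem_Ico hnM' fun k hk =>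
      Set.indicator_of_notMem (fun hkA => ?_) _
    obtain ⟨hnk, hkM⟩ := Finset.mem_Ico.mp hk
    exact hx ⟨hxA, k, hnk, (Nat.lt_ceil.mp hkM).le, hkA⟩
  have huv : (n : ℝ) * birkhoffAverage ℝ f (A.indicator (1 : X → ℝ)) n x
      = M * birkhoffAverage ℝ f (A.indicator (1 : X → ℝ)) M x := by
    rw [← smul_eq_mul, natCast_smul_birkhoffAverage _ _ hn.ne', ← smul_eq_mul,
      natCast_smul_birkhoffAverage _ _ (hn.trans_le hnM').ne', hsum]
  rcases le_dist_or_le_dist_of_mul_eq_mul hρ hc (by exact_mod_cast hn) hnM huv with h | h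
  exacts [Or.inl (Or.inr h), Or.inr h]

end WindowReturn

theorem ENNReal.ofReal_one_sub_mul_le {a b : ENNReal} {ε : ℝ} (ha : a ≠ ⊤) (hε : 0 ≤ ε)
    (h : a ≤ b + ENNReal.ofReal ε * a) : ENNReal.ofReal (1 - ε) * a ≤ b := by
  rcases le_total ε 1 with hε1 | hε1
  · refine (ENNReal.add_le_add_iff_right
      (ENNReal.mul_ne_top (ENNReal.ofReal_ne_top (r := ε)) ha)).mp ?_
    rwa [← add_mul, ← ENNReal.ofReal_add (by linarith) hε, sub_add_cancel, ENNReal.ofReal_one,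
      one_mul]
  · simp [ENNReal.ofReal_eq_zero.mpr (sub_nonpos.mpr hε1)]

/-- For an ergodic measure, a large proportion of points of A return to A with a
return time in the window [n, (1+ρ)n], for every large n. -/
theorem return_time_window {X : Type*} [MeasurableSpace X]
    (f : X → X) (μ : Measure X) [IsProbabilityMeasure μ]
    (herg : Ergodic f μ)
    (A : Set X) (hA : MeasurableSet A) (hApos : 0 < μ A)
    (ρ : ℝ) (hρ : 0 < ρ) :
    ∀ ε : ℝ, 0 < ε → ε < 1 → ∃ N : ℕ, ∀ n ≥ N,
      ENNReal.ofReal (1 - ε) * μ A ≤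
        μ {x ∈ A | ∃ m : ℕ, n ≤ m ∧ (m : ℝ) ≤ (1 + ρ) * n ∧ f^[m] x ∈ A} := by
  intro ε hε _
  set φ := birkhoffAverage ℝ f (A.indicator (1 : X → ℝ))
  set δ := ρ * μ.real A / (2 + ρ)
  set η := ENNReal.ofReal ε * μ A / 2
  have hμA : 0 < μ.real A := ENNReal.toReal_pos hApos.ne' (measure_ne_top μ A)
  have hη : 0 < η := ENNReal.div_pos (mul_ne_zero (ENNReal.ofReal_pos.mpr hε).ne' hApos.ne')
    ENNReal.ofNat_ne_top
  obtain ⟨N, hN⟩ := eventually_atTop.mp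
    ((herg.tendstoInMeasure_birkhoffAverage_indicator hA (ENNReal.ofReal δ)
      (ENNReal.ofReal_pos.mpr (by positivity))).eventually_lt_const hη)
  simp only [edist_dist, ENNReal.ofReal_le_ofReal_iff dist_nonneg] at hN
  refine ⟨max N 1, fun n hn => ENNReal.ofReal_one_sub_mul_le (measure_ne_top μ A) hε.le ?_⟩
  have hnN : N ≤ n := le_of_max_le_left hn
  calc μ A
      ≤ μ (windowReturnSet f A ρ n ∪ {x | δ ≤ dist (φ n x) (μ.real A)}
          ∪ {x | δ ≤ dist (φ ⌈(1 + ρ) * n⌉₊ x) (μ.real A)}) :=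
        measure_mono (subset_windowReturnSet_union hρ.le hμA.le (le_of_max_le_right hn))
    _ ≤ μ (windowReturnSet f A ρ n) + η + η := by
        grw [measure_union_le, measure_union_le, hN n hnN,
          hN _ (hnN.trans (le_natCeil_one_add_mul hρ.le n))]
    _ = μ (windowReturnSet f A ρ n) + ENNReal.ofReal ε * μ A := by
        rw [add_assoc, ENNReal.add_halves]
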